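/- For reals a, b, x define f(a, b, x) = (a+x)·𝟙[a+x ≤ 2] + 2(b+x)·𝟙[b+x ≤ 1] + (b+x)·𝟙[b+x ≤ 3]. Then f(a, b, x) ≤ 5 for all a, b, x ∈ ℝ. Moreover, if a, b ∈ {1, 2}, then the supremum over x ∈ ℝ of f(a, b, x) is attained and equals 4 if a = b and equals 5 if a ≠ b. -/

import Mathlib

/-- The per-edge payment function of the APX-hardness reduction:
`f a b x = (a+x)·𝟙[a+x ≤ 2] + 2(b+x)·𝟙[b+x ≤ 1] + (b+x)·𝟙[b+x ≤ 3]`. -/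
noncomputable def edgePayment (a b x : ℝ) : ℝ :=
  (if a + x ≤ 2 then a + x else 0) + 2 * (if b + x ≤ 1 then b + x else 0) +
    (if b + x ≤ 3 then b + x else 0)

/-!
The two budget-1 customers pay only when `b + x ≤ 1`, and then the budget-3 customer pays at
most `1`; otherwise the budget-2 and budget-3 customers pay at most `2 + 3`. When `a = b` all
customers see the same price `t = a + x`, and the total is `4t`, `2t`, `t` or `0` according to
which budgets `t` fits. The bound `5` is reached when `a` and `b` differ by `1`.
-/

lemma ite_self_le_of_nonneg {t c : ℝ} (hc : 0 ≤ c) : (if t ≤ c then t else 0) ≤ c := by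
  split_ifs with h
  · exact h
  · exact hc

theorem edgePayment_le_five (a b x : ℝ) : edgePayment a b x ≤ 5 := by
  have hA : (if a + x ≤ 2 then a + x else 0) ≤ 2 := ite_self_le_of_nonneg (by norm_num)
  by_cases hB : b + x ≤ 1
  · rw [edgePayment, if_pos hB, if_pos (show b + x ≤ 3 by linarith)]
    linarith
  · have hC : (if b + x ≤ 3 then b + x else 0) ≤ 3 := ite_self_le_of_nonneg (by norm_num)
    rw [edgePayment, if_neg hB]
    linarith

theorem edgePayment_self_le_four (a x : ℝ) : edgePayment a a x ≤ 4 := by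
  unfold edgePayment
  split_ifs <;> linarith

theorem isGreatest_range_edgePayment_self (a : ℝ) :
    IsGreatest (Set.range (edgePayment a a)) 4 :=
  ⟨⟨1 - a, by norm_num [edgePayment]⟩, by
    rintro _ ⟨x, rfl⟩
    exact edgePayment_self_le_four a x⟩

theorem edgePayment_eq_five_of_eq_add_one {a b : ℝ} (h : b = a + 1) : edgePayment a b (2 - a) = 5 := by
  subst h
  unfold edgePayment
  ring_nf
  norm_num

theorem edgePayment_eq_five_of_add_one_eq {a b : ℝ} (h : a = b + 1) : edgePayment a b (1 - b) = 5 := by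
  subst h
  unfold edgePayment
  ring_nf
  norm_num

theorem isGreatest_range_edgePayment_five {a b : ℝ} (h : 5 ∈ Set.range (edgePayment a b)) :
    IsGreatest (Set.range (edgePayment a b)) 5 :=
  ⟨h, by
    rintro _ ⟨x, rfl⟩
    exact edgePayment_le_five a b x⟩

/-- per-edge profit bound: 4 for an uncut edge, 5 for a cut edge.
`f a b x ≤ 5` for all reals, and for `a, b ∈ {1, 2}` the supremum over `x` of
`f a b x` is attained and equals `4` if `a = b` and `5` if `a ≠ b`. -/
theorem edge_payment_bounds :
    (∀ a b x : ℝ, edgePayment a b x ≤ 5) ∧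
    (∀ a b : ℝ, (a = 1 ∨ a = 2) → (b = 1 ∨ b = 2) →
      IsGreatest (Set.range (edgePayment a b)) (if a = b then 4 else 5)) := by
  refine ⟨edgePayment_le_five, fun a b ha hb => ?_⟩
  split_ifs with hab
  · subst hab
    exact isGreatest_range_edgePayment_self a
  · apply isGreatest_range_edgePayment_five
    have hcut : b = a + 1 ∨ a = b + 1 := by
      rcases ha with rfl | rfl <;> rcases hb with rfl | rfl <;> norm_num at *
    rcases hcut with h | h
    · exact ⟨_, edgePayment_eq_five_of_eq_add_one h⟩
    · exact ⟨_, edgePayment_eq_five_of_add_one_eq h⟩
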